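/- Assume in addition that lim_{t↑1} λ(t)² Λ(t) log(Λ(t)) = 0. Then for every pair x ≠ z in ℝ one has lim_{t↑1} φ(t,x,z) = +∞. -/

import Mathlib

/-!
Put `A = λ² (Λ + ℓ)`. Then `φ = exp ((x - z)² / (2A) - log (2 (Λ + ℓ)) / 2)`, so `φ → ∞` as soon
as `A → 0` and `A · log (2 (Λ + ℓ)) → 0`. Both follow from the hypothesis once `λ → 0`, because
`Λ + ℓ` and `(Λ + ℓ) log (2 (Λ + ℓ))` are bounded by a constant plus a multiple of `|Λ log Λ|`.
For `λ → 0`: `V ≤ 1` near `1` gives `∫₀ᵗ 1/(V - s) ≥ -log (1 - t) + O(1) → ∞`. Since a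
non-integrable interval integral is `0` in Lean, `V ≤ 1` can fail when `σ²` is integrable on each
`[0, t]` but not on `[0, 1]`; then `λ ≤ 1` gives `Λ t ≥ ∫₀ᵗ σ² → ∞`, and `λ → 0` follows from the
hypothesis instead.
-/

open Real Filter Topology Set MeasureTheory

section Asymptotics

variable {α : Type*} {l : Filter α}

lemma tendsto_sq_nhds_zero_of_mul_mul_log {lam L : α → ℝ} (hL : Tendsto L l atTop)
    (h : Tendsto (fun t => lam t ^ 2 * L t * log (L t)) l (𝓝 0)) :
    Tendsto (fun t => lam t ^ 2) l (𝓝 0) := by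
  have hLlog : Tendsto (fun t => L t * log (L t)) l atTop :=
    hL.atTop_mul_atTop₀ (tendsto_log_atTop.comp hL)
  have h' := h.mul (tendsto_inv_atTop_zero.comp hLlog)
  rw [zero_mul] at h'
  refine h'.congr' ?_
  filter_upwards [hLlog.eventually_gt_atTop 0] with t ht
  simp only [Function.comp_apply, mul_assoc, mul_inv_cancel_right₀ ht.ne']

lemma exists_abs_le_const_add_mul_abs {f g : ℝ → ℝ} {K c : ℝ} (hc : 0 ≤ c)
    (hf : ContinuousOn f (Icc 0 K)) (hfg : ∀ x, K ≤ x → |f x| ≤ c * |g x|) :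
    ∃ C, ∀ x, 0 ≤ x → |f x| ≤ C + c * |g x| := by
  obtain ⟨C, hC⟩ := isCompact_Icc.exists_bound_of_continuousOn hf
  refine ⟨max C 0, fun x hx => ?_⟩
  have hcg : 0 ≤ c * |g x| := by positivity
  rcases le_total x K with hxK | hKx
  · have := hC x ⟨hx, hxK⟩
    rw [Real.norm_eq_abs] at this
    linarith [le_max_left C 0]
  · linarith [hfg x hKx, le_max_right C 0]

lemma exists_abs_add_le_const_add_mul_log {ℓ : ℝ} (hℓ : 0 ≤ ℓ) :
    ∃ C, ∀ x, 0 ≤ x → |x + ℓ| ≤ C + 2 * |x * log x| := by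
  refine exists_abs_le_const_add_mul_abs zero_le_two (K := max (exp 1) ℓ)
    (continuous_id.add continuous_const).continuousOn fun x hx => ?_
  have he : exp 1 ≤ x := le_of_max_le_left hx
  have hlog : 1 ≤ log x := by simpa using log_le_log (exp_pos 1) he
  have hx0 : 0 ≤ x := (exp_pos 1).le.trans he
  rw [abs_of_nonneg (by positivity), abs_of_nonneg (by positivity)]
  nlinarith [le_of_max_le_right hx]

lemma exists_abs_mul_log_le_const_add_mul_log {ℓ : ℝ} (hℓ : 0 < ℓ) :
    ∃ C, ∀ x, 0 ≤ x → |(x + ℓ) * log (2 * (x + ℓ))| ≤ C + 3 * |x * log x| := by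
  refine exists_abs_le_const_add_mul_abs zero_le_three (K := max 3 (2 * ℓ)) ?_ fun x hx => ?_
  · refine (continuous_id.add continuous_const).continuousOn.mul
      (ContinuousOn.log (by fun_prop) fun x hx => ?_)
    have : 0 ≤ x := hx.1
    positivity
  have h3 : 3 ≤ x := le_of_max_le_left hx
  have h2ℓ : 2 * ℓ ≤ x := le_of_max_le_right hx
  have hlog_le : log (2 * (x + ℓ)) ≤ 2 * log x := by
    rw [← log_rpow (by linarith)]
    exact log_le_log (by linarith) (by norm_num; nlinarith)
  have hlog2 : 0 ≤ log (2 * (x + ℓ)) := log_nonneg (by linarith)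
  have hlogx : 0 ≤ log x := log_nonneg (by linarith)
  rw [abs_of_nonneg (by positivity), abs_of_nonneg (by positivity)]
  nlinarith

lemma tendsto_mul_comp_nhds_zero {u L : α → ℝ} {f g : ℝ → ℝ} {C c : ℝ}
    (hfg : ∀ x, 0 ≤ x → |f x| ≤ C + c * |g x|) (hu0 : ∀ᶠ t in l, 0 ≤ u t)
    (hL : ∀ᶠ t in l, 0 ≤ L t) (hu : Tendsto u l (𝓝 0))
    (hug : Tendsto (fun t => u t * g (L t)) l (𝓝 0)) :
    Tendsto (fun t => u t * f (L t)) l (𝓝 0) := by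
  have hbound : Tendsto (fun t => C * u t + c * |u t * g (L t)|) l (𝓝 0) := by
    simpa using (hu.const_mul C).add (hug.abs.const_mul c)
  refine squeeze_zero_norm' ?_ hbound
  filter_upwards [hu0, hL] with t hut hLt
  rw [Real.norm_eq_abs, abs_mul, abs_mul, abs_of_nonneg hut]
  nlinarith [hfg _ hLt]

lemma tendsto_inv_sqrt_mul_exp_div_atTop {u M : α → ℝ} {k : ℝ} (hk : 0 < k)
    (hu : ∀ᶠ t in l, 0 < u t) (hM : ∀ᶠ t in l, 0 < M t)
    (h0 : Tendsto (fun t => u t * M t) l (𝓝 0))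
    (hlog : Tendsto (fun t => u t * (M t * log (2 * M t))) l (𝓝 0)) :
    Tendsto (fun t => (√(2 * M t))⁻¹ * exp (k / (2 * u t * M t))) l atTop := by
  have hA : ∀ᶠ t in l, 0 < u t * M t := by
    filter_upwards [hu, hM] with t hut hMt using mul_pos hut hMt
  have hinv : Tendsto (fun t => (u t * M t)⁻¹) l atTop :=
    (tendsto_nhdsWithin_iff.2 ⟨h0, hA⟩).inv_tendsto_nhdsGT_zero
  have hnum : Tendsto (fun t => (k - u t * (M t * log (2 * M t))) / 2) l (𝓝 (k / 2)) := by
    simpa using (tendsto_const_nhds.sub hlog).div_const 2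
  refine (tendsto_exp_atTop.comp (hinv.atTop_mul_pos (half_pos hk) hnum)).congr' ?_
  filter_upwards [hu, hM] with t hut hMt
  have hsqrt : (√(2 * M t))⁻¹ = exp (-(log (2 * M t) / 2)) := by
    rw [sqrt_eq_rpow, rpow_def_of_pos (by positivity), exp_neg]
    ring_nf
  rw [Function.comp_apply, hsqrt, ← exp_add]
  congr 1
  field_simp
  ring

end Asymptotics

lemma tendsto_inv_one_sub_atTop : Tendsto (fun t : ℝ => (1 - t)⁻¹) (𝓝[<] 1) atTop := by
  refine Tendsto.inv_tendsto_nhdsGT_zero (tendsto_nhdsWithin_iff.2 ⟨?_, ?_⟩)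
  · have h : Tendsto (fun t : ℝ => 1 - t) (𝓝 1) (𝓝 (1 - 1)) := tendsto_const_nhds.sub tendsto_id
    rw [sub_self] at h
    exact h.mono_left nhdsWithin_le_nhds
  · exact eventually_nhdsWithin_of_forall fun t ht => mem_Ioi.2 (sub_pos.2 ht)

lemma tendsto_intervalIntegral_atTop_of_inv_one_sub_le {h : ℝ → ℝ} {a b : ℝ} (ha : a < 1)
    (hint : ∀ t ∈ Ico a 1, IntervalIntegrable h volume b t)
    (hle : ∀ s ∈ Ico a 1, (1 - s)⁻¹ ≤ h s) :
    Tendsto (fun t => ∫ s in b..t, h s) (𝓝[<] 1) atTop := by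
  have hlower : ∀ t ∈ Ico a 1,
      (∫ s in b..a, h s) + log ((1 - a) * (1 - t)⁻¹) ≤ ∫ s in b..t, h s := by
    intro t ht
    have hint_at := (hint a ⟨le_rfl, ha⟩).symm.trans (hint t ht)
    have hcont : ContinuousOn (fun s : ℝ => (1 - s)⁻¹) (Icc a t) :=
      (continuousOn_const.sub continuousOn_id).inv₀ fun s hs => by
        simp only [Pi.sub_apply, id_eq]; linarith [hs.2, ht.2]
    have hone_sub : ∫ s in a..t, (1 - s)⁻¹ = log ((1 - a) * (1 - t)⁻¹) := by
      rw [intervalIntegral.integral_comp_sub_left (fun x => x⁻¹),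
        integral_inv_of_pos (by linarith [ht.2]) (by linarith), div_eq_mul_inv]
    have hmono : ∫ s in a..t, (1 - s)⁻¹ ≤ ∫ s in a..t, h s :=
      intervalIntegral.integral_mono_on ht.1 (hcont.intervalIntegrable_of_Icc ht.1) hint_at
        fun s hs => hle s ⟨hs.1, hs.2.trans_lt ht.2⟩
    rw [← intervalIntegral.integral_add_adjacent_intervals (hint a ⟨le_rfl, ha⟩) hint_at]
    linarith
  have hlog : Tendsto (fun t => (∫ s in b..a, h s) + log ((1 - a) * (1 - t)⁻¹)) (𝓝[<] 1) atTop :=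
    tendsto_atTop_add_const_left _ _
      (tendsto_log_atTop.comp (tendsto_inv_one_sub_atTop.const_mul_atTop (sub_pos.2 ha)))
  refine tendsto_atTop_mono' _ ?_ hlog
  filter_upwards [Ioo_mem_nhdsLT ha] with t ht using hlower t ⟨ht.1.le, ht.2⟩

lemma tendsto_intervalIntegral_atTop_of_not_intervalIntegrable {f : ℝ → ℝ} {a b : ℝ}
    (hab : a < b) (hf : 0 ≤ f) (hloc : ∀ t ∈ Ico a b, IntervalIntegrable f volume a t)
    (hb : ¬ IntervalIntegrable f volume a b) :
    Tendsto (fun t => ∫ x in a..t, f x) (𝓝[<] b) atTop := by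
  have hunbdd : ∀ M, ∃ t ∈ Ico a b, M ≤ ∫ x in a..t, f x := by
    intro M
    by_contra! hlt
    refine hb ((intervalIntegrable_iff_integrableOn_Ioc_of_le hab.le).2 ?_)
    set s : ℕ → ℝ := fun n => b - (b - a) * (1 / (n + 1))
    have hs : ∀ n, s n ∈ Ico a b := fun n => by
      have h0 : (0 : ℝ) < 1 / (n + 1) := by positivity
      have h1 : 1 / ((n : ℝ) + 1) ≤ 1 := by
        rw [div_le_one (by positivity)]; linarith [n.cast_nonneg (α := ℝ)]
      constructor <;> nlinarith
    refine integrableOn_Ioc_of_intervalIntegral_norm_bounded_right (I := M)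
      (fun n => (intervalIntegrable_iff_integrableOn_Ioc_of_le (hs n).1).1 (hloc _ (hs n)))
      (l := atTop) ?_ (Eventually.of_forall fun n => ?_)
    · simpa [s] using (tendsto_const_nhds (x := b)).sub
        ((tendsto_one_div_add_atTop_nhds_zero_nat).const_mul (b - a))
    · simp_rw [Real.norm_of_nonneg (hf _)]
      rw [← intervalIntegral.integral_of_le (hs n).1]
      exact (hlt _ (hs n)).le
  refine tendsto_atTop.2 fun M => ?_
  obtain ⟨t₀, ht₀, hM⟩ := hunbdd M
  filter_upwards [Ioo_mem_nhdsLT ht₀.2] with t ht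
  exact hM.trans (intervalIntegral.integral_mono_interval le_rfl ht₀.1 ht.1.le
    (Eventually.of_forall hf) (hloc t ⟨ht₀.1.trans ht.1.le, ht.2⟩))

lemma aemeasurable_intervalIntegral_of_nonneg {f : ℝ → ℝ} (hf : Measurable f) (hf0 : 0 ≤ f)
    (a : ℝ) : AEMeasurable (fun t => ∫ x in a..t, f x) (volume.restrict (Ioi a)) := by
  -- on `Ioi a` the primitive is the real part of a monotone `ℝ≥0∞`-valued function
  have hmono : Monotone fun t => ∫⁻ x in Ioc a t, ENNReal.ofReal (f x) :=
    fun s t hst => lintegral_mono_set (Ioc_subset_Ioc_right hst)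
  refine (ENNReal.measurable_toReal.comp hmono.measurable).aemeasurable.congr ?_
  filter_upwards [ae_restrict_mem measurableSet_Ioi] with t ht
  rw [Function.comp_apply, intervalIntegral.integral_of_le (le_of_lt ht),
    integral_eq_lintegral_of_nonneg_ae (Eventually.of_forall hf0) hf.aestronglyMeasurable]

lemma integral_le_integral_one_add_div_sq {f h lam : ℝ → ℝ} {t : ℝ} (ht : 0 ≤ t)
    (hlam : ∀ s, lam s = exp (-∫ u in (0:ℝ)..s, h u))
    (hf : IntervalIntegrable f volume 0 t) (hf0 : 0 ≤ f)
    (hh : IntervalIntegrable h volume 0 t) (hh0 : ∀ s ∈ Icc 0 t, 0 ≤ h s) :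
    ∫ s in (0:ℝ)..t, f s ≤ ∫ s in (0:ℝ)..t, (1 + f s) / lam s ^ 2 := by
  have hlam_cont : ContinuousOn lam (Icc 0 t) := by
    have := intervalIntegral.continuousOn_primitive_interval' hh left_mem_uIcc
    rw [uIcc_of_le ht] at this
    exact (continuous_exp.comp_continuousOn this.neg).congr fun s _ => hlam s
  have hlam_pos : ∀ s, 0 < lam s := fun s => (hlam s).symm ▸ exp_pos _
  have hlam_le : ∀ s ∈ Icc 0 t, lam s ≤ 1 := fun s hs => by
    rw [hlam, exp_le_one_iff, neg_nonpos]
    exact intervalIntegral.integral_nonneg hs.1 fun u hu => hh0 u ⟨hu.1, hu.2.trans hs.2⟩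
  have hint : IntervalIntegrable (fun s => (1 + f s) / lam s ^ 2) volume 0 t := by
    rw [intervalIntegrable_iff_integrableOn_Icc_of_le ht]
    have h1f : IntervalIntegrable (fun s => 1 + f s) volume 0 t := intervalIntegrable_const.add hf
    have := ((intervalIntegrable_iff_integrableOn_Icc_of_le ht).1 h1f).continuousOn_mul
      ((hlam_cont.pow 2).inv₀ fun s _ => (pow_pos (hlam_pos s) 2).ne') isCompact_Icc
    simpa only [div_eq_inv_mul, Pi.inv_apply, Pi.pow_apply] using this
  refine intervalIntegral.integral_mono_on ht hf hint fun s hs => ?_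
  rw [le_div_iff₀ (pow_pos (hlam_pos s) 2)]
  have : lam s ^ 2 ≤ 1 := pow_le_one₀ (hlam_pos s).le (hlam_le s hs)
  have hfs : 0 ≤ f s := hf0 s
  nlinarith [mul_le_mul_of_nonneg_left this hfs]

section Model

variable {c : ℝ} {σ V : ℝ → ℝ}

lemma eq_one_of_not_intervalIntegrable (hV : ∀ t, V t = c + ∫ s in (0:ℝ)..t, σ s ^ 2)
    (hV1 : V 1 = 1) (hI : ¬ IntervalIntegrable (fun s => σ s ^ 2) volume 0 1) : c = 1 := by
  rw [← hV1, hV, intervalIntegral.integral_undef hI, add_zero]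

lemma intervalIntegrable_one_div_sub (hσ : Measurable σ)
    (hV : ∀ t, V t = c + ∫ s in (0:ℝ)..t, σ s ^ 2) (hVt : ∀ t ∈ Ico (0:ℝ) 1, t < V t)
    (hV1 : V 1 = 1) {t : ℝ} (ht : t ∈ Ico (0:ℝ) 1) :
    IntervalIntegrable (fun s => 1 / (V s - s)) volume 0 t := by
  have hpos : ∀ s ∈ Icc 0 t, 0 < V s - s :=
    fun s hs => sub_pos.2 (hVt s ⟨hs.1, hs.2.trans_lt ht.2⟩)
  by_cases hI : IntervalIntegrable (fun s => σ s ^ 2) volume 0 1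
  · have hVcont : ContinuousOn V (Icc 0 t) := by
      have hIt : IntervalIntegrable (fun s => σ s ^ 2) volume 0 t := hI.mono_set (by
        rw [uIcc_of_le ht.1, uIcc_of_le zero_le_one]; exact Icc_subset_Icc_right ht.2.le)
      have := intervalIntegral.continuousOn_primitive_interval' hIt left_mem_uIcc
      rw [uIcc_of_le ht.1] at this
      exact (continuousOn_const.add this).congr fun s _ => hV s
    exact (continuousOn_const.div (hVcont.sub continuousOn_id) fun s hs => (hpos s hs).ne')
      |>.intervalIntegrable_of_Icc ht.1
  · have hc := eq_one_of_not_intervalIntegrable hV hV1 hI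
    have hV_meas : AEMeasurable V (volume.restrict (Ioi 0)) :=
      (aemeasurable_const.add (aemeasurable_intervalIntegral_of_nonneg (hσ.pow_const 2)
        (fun s => sq_nonneg (σ s)) 0)).congr (ae_of_all _ fun s => (hV s).symm)
    have hmeas : AEStronglyMeasurable (fun s => 1 / (V s - s)) (volume.restrict (Ioc 0 t)) :=
      ((aemeasurable_const.div (hV_meas.sub aemeasurable_id)).mono_measure
        (Measure.restrict_mono Ioc_subset_Ioi_self le_rfl)).aestronglyMeasurable
    rw [intervalIntegrable_iff_integrableOn_Ioc_of_le ht.1]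
    refine (integrableOn_const (C := (1 - t)⁻¹) measure_Ioc_lt_top.ne).mono' hmeas ?_
    filter_upwards [ae_restrict_mem measurableSet_Ioc] with s hs
    have hVs : 1 ≤ V s := by
      rw [hV, hc, le_add_iff_nonneg_right]
      exact intervalIntegral.integral_nonneg hs.1.le fun u _ => sq_nonneg (σ u)
    have hpos_s := hpos s ⟨hs.1.le, hs.2⟩
    rw [norm_of_nonneg (by positivity), one_div]
    exact inv_anti₀ (by linarith [ht.2]) (by linarith [hs.2])

lemma tendsto_Lam_atTop {lam Lam : ℝ → ℝ} (hVt : ∀ t ∈ Ico (0:ℝ) 1, t < V t)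
    (hlam : ∀ t, lam t = exp (-∫ s in (0:ℝ)..t, 1 / (V s - s)))
    (hLam : ∀ t, Lam t = ∫ s in (0:ℝ)..t, (1 + σ s ^ 2) / lam s ^ 2)
    (hint : ∀ t ∈ Ico (0:ℝ) 1, IntervalIntegrable (fun s => 1 / (V s - s)) volume 0 t)
    (hloc : ∀ t ∈ Ico (0:ℝ) 1, IntervalIntegrable (fun s => σ s ^ 2) volume 0 t)
    (hI : ¬ IntervalIntegrable (fun s => σ s ^ 2) volume 0 1) :
    Tendsto Lam (𝓝[<] 1) atTop := by
  refine tendsto_atTop_mono' _ ?_ (tendsto_intervalIntegral_atTop_of_not_intervalIntegrable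
    one_pos (fun s => sq_nonneg (σ s)) hloc hI)
  filter_upwards [Ioo_mem_nhdsLT one_pos] with t ht
  rw [hLam]
  exact integral_le_integral_one_add_div_sq ht.1.le hlam (hloc t ⟨ht.1.le, ht.2⟩)
    (fun s => sq_nonneg (σ s)) (hint t ⟨ht.1.le, ht.2⟩)
    fun s hs => (one_div_pos.2 (sub_pos.2 (hVt s ⟨hs.1, hs.2.trans_lt ht.2⟩))).le

lemma tendsto_lam_sq_nhds_zero {lam Lam : ℝ → ℝ} (hσ : Measurable σ)
    (hV : ∀ t, V t = c + ∫ s in (0:ℝ)..t, σ s ^ 2) (hVt : ∀ t ∈ Ico (0:ℝ) 1, t < V t)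
    (hV1 : V 1 = 1) (hlam : ∀ t, lam t = exp (-∫ s in (0:ℝ)..t, 1 / (V s - s)))
    (hLam : ∀ t, Lam t = ∫ s in (0:ℝ)..t, (1 + σ s ^ 2) / lam s ^ 2)
    (hlim : Tendsto (fun t => lam t ^ 2 * Lam t * log (Lam t)) (𝓝[<] 1) (𝓝 0)) :
    Tendsto (fun t => lam t ^ 2) (𝓝[<] 1) (𝓝 0) := by
  have hint : ∀ t ∈ Ico (0:ℝ) 1, IntervalIntegrable (fun s => 1 / (V s - s)) volume 0 t :=
    fun t ht => intervalIntegrable_one_div_sub hσ hV hVt hV1 ht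
  suffices Tendsto (fun t => ∫ s in (0:ℝ)..t, 1 / (V s - s)) (𝓝[<] 1) atTop ∨
      Tendsto Lam (𝓝[<] 1) atTop by
    rcases this with hH | hL
    · simpa [hlam] using (tendsto_exp_neg_atTop_nhds_zero.comp hH).pow 2
    · exact tendsto_sq_nhds_zero_of_mul_mul_log hL hlim
  have hinv_le : ∀ s ∈ Ico (0:ℝ) 1, V s ≤ 1 → (1 - s)⁻¹ ≤ 1 / (V s - s) := fun s hs hVs => by
    rw [one_div]; exact inv_anti₀ (sub_pos.2 (hVt s hs)) (by linarith)
  by_cases hI : IntervalIntegrable (fun s => σ s ^ 2) volume 0 1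
  · refine Or.inl (tendsto_intervalIntegral_atTop_of_inv_one_sub_le one_pos hint
      fun s hs => hinv_le s hs ?_)
    rw [hV, ← hV1, hV 1, add_le_add_iff_left]
    exact intervalIntegral.integral_mono_interval le_rfl hs.1 hs.2.le
      (ae_of_all _ fun u => sq_nonneg (σ u)) hI
  have hc := eq_one_of_not_intervalIntegrable hV hV1 hI
  by_cases hloc : ∀ t ∈ Ico (0:ℝ) 1, IntervalIntegrable (fun s => σ s ^ 2) volume 0 t
  · exact Or.inr (tendsto_Lam_atTop hVt hlam hLam hint hloc hI)
  -- `V = c + 0 = 1` on `[t₁, 1)`, the interval integral there being the junk value `0`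
  push Not at hloc
  obtain ⟨t₁, ht₁, hnot⟩ := hloc
  refine Or.inl (tendsto_intervalIntegral_atTop_of_inv_one_sub_le ht₁.2
    (fun t ht => hint t ⟨ht₁.1.trans ht.1, ht.2⟩)
    fun s hs => hinv_le s ⟨ht₁.1.trans hs.1, hs.2⟩ ?_)
  rw [hV, intervalIntegral.integral_undef fun h => hnot (h.mono_set ?_), hc, add_zero]
  rw [uIcc_of_le ht₁.1, uIcc_of_le (ht₁.1.trans hs.1)]
  exact Icc_subset_Icc_right hs.1

end Model

theorem stmt_5_general
    (c : ℝ)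
    (σ : ℝ → ℝ) (hσmeas : Measurable σ)
    (V : ℝ → ℝ) (hV : ∀ t, V t = c + ∫ s in (0:ℝ)..t, (σ s) ^ 2)
    (hVt : ∀ t ∈ Ico (0:ℝ) 1, t < V t) (hV1 : V 1 = 1)
    (lam : ℝ → ℝ)
    (hlam : ∀ t, lam t = Real.exp (-(∫ s in (0:ℝ)..t, 1 / (V s - s))))
    (Lam : ℝ → ℝ)
    (hLam : ∀ t, Lam t = ∫ s in (0:ℝ)..t, (1 + (σ s) ^ 2) / (lam s) ^ 2)
    (ℓ : ℝ) (hℓ : 0 < ℓ)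
    (φ : ℝ → ℝ → ℝ → ℝ)
    (hφ : ∀ t x z, φ t x z =
      (Real.sqrt (2 * (Lam t + ℓ)))⁻¹ *
        Real.exp ((x - z) ^ 2 / (2 * (lam t) ^ 2 * (Lam t + ℓ))))
    (hlim : Tendsto (fun t => (lam t) ^ 2 * Lam t * Real.log (Lam t))
      (𝓝[<] (1:ℝ)) (𝓝 0)) :
    ∀ x z : ℝ, x ≠ z →
      Tendsto (fun t => φ t x z) (𝓝[<] (1:ℝ)) atTop := by
  intro x z hxz
  have hlam_sq := tendsto_lam_sq_nhds_zero hσmeas hV hVt hV1 hlam hLam hlim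
  have hlam_sq_pos : ∀ᶠ t in 𝓝[<] (1:ℝ), 0 < lam t ^ 2 :=
    Eventually.of_forall fun t => by rw [hlam]; positivity
  have hLam_nonneg : ∀ᶠ t in 𝓝[<] (1:ℝ), 0 ≤ Lam t := by
    filter_upwards [Ioo_mem_nhdsLT one_pos] with t ht
    rw [hLam]
    exact intervalIntegral.integral_nonneg ht.1.le fun s _ => by positivity
  have hlim' : Tendsto (fun t => lam t ^ 2 * (Lam t * log (Lam t))) (𝓝[<] 1) (𝓝 0) := by
    simpa only [mul_assoc] using hlim
  obtain ⟨C₁, hC₁⟩ := exists_abs_add_le_const_add_mul_log hℓ.le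
  obtain ⟨C₂, hC₂⟩ := exists_abs_mul_log_le_const_add_mul_log hℓ
  have hA := tendsto_mul_comp_nhds_zero hC₁ (hlam_sq_pos.mono fun _ => le_of_lt) hLam_nonneg
    hlam_sq hlim'
  have hA_log := tendsto_mul_comp_nhds_zero hC₂ (hlam_sq_pos.mono fun _ => le_of_lt)
    hLam_nonneg hlam_sq hlim'
  simp only [hφ]
  exact tendsto_inv_sqrt_mul_exp_div_atTop (pow_two_pos_of_ne_zero (sub_ne_zero.2 hxz))
    hlam_sq_pos (hLam_nonneg.mono fun t ht => by linarith) hA hA_log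

/-- Assume in addition that `lim_{t↑1} λ(t)² Λ(t) log(Λ(t)) = 0`.
Then for every pair `x ≠ z` in `ℝ` one has `lim_{t↑1} φ(t,x,z) = +∞`. -/
theorem stmt_5
    (c : ℝ) (hc0 : 0 < c) (hc1 : c ≤ 1)
    (σ : ℝ → ℝ) (hσmeas : Measurable σ) (hσ0 : ∀ t ∈ Icc (0:ℝ) 1, 0 ≤ σ t)
    (V : ℝ → ℝ) (hV : ∀ t, V t = c + ∫ s in (0:ℝ)..t, (σ s) ^ 2)
    (hVt : ∀ t ∈ Ico (0:ℝ) 1, t < V t) (hV1 : V 1 = 1)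
    (lam : ℝ → ℝ)
    (hlam : ∀ t, lam t = Real.exp (-(∫ s in (0:ℝ)..t, 1 / (V s - s))))
    (Lam : ℝ → ℝ)
    (hLam : ∀ t, Lam t = ∫ s in (0:ℝ)..t, (1 + (σ s) ^ 2) / (lam s) ^ 2)
    (ℓ : ℝ) (hℓ : 0 < ℓ)
    (φ : ℝ → ℝ → ℝ → ℝ)
    (hφ : ∀ t x z, φ t x z =
      (Real.sqrt (2 * (Lam t + ℓ)))⁻¹ *
        Real.exp ((x - z) ^ 2 / (2 * (lam t) ^ 2 * (Lam t + ℓ))))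
    (hlim : Tendsto (fun t => (lam t) ^ 2 * Lam t * Real.log (Lam t))
      (𝓝[<] (1:ℝ)) (𝓝 0)) :
    ∀ x z : ℝ, x ≠ z →
      Tendsto (fun t => φ t x z) (𝓝[<] (1:ℝ)) atTop :=
  stmt_5_general c σ hσmeas V hV hVt hV1 lam hlam Lam hLam ℓ hℓ φ hφ hlim
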